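/- Let μ be a directed distance on a nonempty finite set S. There exists a map φ : P_μ → T_μ such that (1) φ(p) ≤ p for all p ∈ P_μ (in particular φ(p) = p for p ∈ T_μ), and (2) D_∞(φ(p), φ(q)) ≤ D_∞(p,q) for all p,q ∈ P_μ. -/
import Mathlib


open scoped BigOperators

/-- Points of `ℝ^{S^{cr}}`: pairs `p = (p^c, p^r)` of functions `S → ℝ`,
with the componentwise partial order (the product/pi order). -/
abbrev Pt (S : Type*) := (S → ℝ) × (S → ℝ)

/-- `μ` is a directed distance: nonnegative with zero diagonal. -/
def DirDist {S : Type*} (μ : S → S → ℝ) : Prop :=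
  (∀ s t, 0 ≤ μ s t) ∧ (∀ s, μ s s = 0)

/-- `d` is a directed metric: a directed distance satisfying the triangle inequality. -/
def DirMetric {V : Type*} (d : V → V → ℝ) : Prop :=
  DirDist d ∧ ∀ x y z, d x z ≤ d x y + d y z

/-- The polyhedron `Π_μ`. -/
def PiP {S : Type*} (μ : S → S → ℝ) : Set (Pt S) :=
  {p | ∀ s t, μ s t ≤ p.1 s + p.2 t}

/-- The polyhedron `P_μ = Π_μ ∩ ℝ_+^{S^{cr}}`. -/
def PP {S : Type*} (μ : S → S → ℝ) : Set (Pt S) :=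
  {p ∈ PiP μ | 0 ≤ p}

/-- The directed tight span `T_μ`: minimal elements of `P_μ`. -/
def TT {S : Type*} (μ : S → S → ℝ) : Set (Pt S) :=
  {p ∈ PP μ | ∀ q ∈ PP μ, q ≤ p → q = p}

/-- `Q_μ`: minimal elements of `Π_μ`. -/
def QQ {S : Type*} (μ : S → S → ℝ) : Set (Pt S) :=
  {p ∈ PiP μ | ∀ q ∈ PiP μ, q ≤ p → q = p}

/-- `Q_μ^+ = Q_μ ∩ ℝ_+^{S^{cr}}`. -/
def QP {S : Type*} (μ : S → S → ℝ) : Set (Pt S) :=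
  QQ μ ∩ {p | 0 ≤ p}

/-- `D_∞^+(f,g) = max_x (g(x) - f(x))_+`. -/
noncomputable def Dplus {X : Type*} [Fintype X] (f g : X → ℝ) : ℝ :=
  ⨆ x, max (g x - f x) 0

/-- `D_∞(p,q) = max ( D_∞^+(p^c,q^c), D_∞^+(q^r,p^r) )`. -/
noncomputable def Dinf {S : Type*} [Fintype S] (p q : Pt S) : ℝ :=
  max (Dplus p.1 q.1) (Dplus q.2 p.2)

/-- A subset `R` is balanced if no pair `p, q ∈ R` satisfies `p^c < q^c`,
and no pair satisfies `p^r < q^r`. -/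
def BalancedSet {S : Type*} (R : Set (Pt S)) : Prop :=
  (¬ ∃ p ∈ R, ∃ q ∈ R, ∀ s, p.1 s < q.1 s) ∧
  (¬ ∃ p ∈ R, ∃ q ∈ R, ∀ s, p.2 s < q.2 s)

/-- The vector `e = (1, -1)` spanning the linearity space of `Π_μ`. -/
def eVec (S : Type*) : Pt S := (fun _ => 1, fun _ => -1)

/-- `R ⊆ Q_μ` is a section: every point of `Q_μ` differs from exactly one point
of `R` by a multiple of `e`. -/
def IsSection {S : Type*} (μ : S → S → ℝ) (R : Set (Pt S)) : Prop :=
  R ⊆ QQ μ ∧ ∀ q ∈ QQ μ, ∃! p, p ∈ R ∧ ∃ α : ℝ, q - p = α • eVec S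

/-- The length of the cycle `(x 0, x 1, …, x m)` with respect to `d`. -/
def cycLen {V : Type*} (d : V → V → ℝ) (m : ℕ) (x : Fin (m + 1) → V) : ℝ :=
  ∑ i, d (x i) (x (i + 1))



section Helpers

variable {S : Type*} [Fintype S] [Nonempty S]

lemma le_supmax (f : S → ℝ) (x : S) : max (f x) 0 ≤ ⨆ y, max (f y) 0 :=
  le_ciSup (f := fun y => max (f y) 0) (Set.Finite.bddAbove (Set.finite_range _)) x

lemma le_supmax' (f : S → ℝ) (x : S) : f x ≤ ⨆ y, max (f y) 0 :=
  (le_max_left _ _).trans (le_supmax f x)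

lemma supmax_nonneg (f : S → ℝ) : 0 ≤ ⨆ y, max (f y) 0 :=
  le_trans (le_max_right _ 0) (le_supmax f (Classical.arbitrary S))

omit [Fintype S] in
lemma supmax_le {f : S → ℝ} {B : ℝ} (h0 : 0 ≤ B) (h : ∀ x, f x ≤ B) :
    (⨆ y, max (f y) 0) ≤ B := ciSup_le fun x => max_le (h x) h0

/-- First coordinate of the retraction. -/
noncomputable def Ac (μ : S → S → ℝ) (p : Pt S) : S → ℝ :=
  fun s => ⨆ t, max (μ s t - p.2 t) 0

/-- Second coordinate of the retraction. -/
noncomputable def Bc (μ : S → S → ℝ) (p : Pt S) : S → ℝ :=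
  fun t => ⨆ s, max (μ s t - Ac μ p s) 0

lemma Ac_nonneg (μ : S → S → ℝ) (p : Pt S) (s : S) : 0 ≤ Ac μ p s :=
  supmax_nonneg _

lemma Bc_nonneg (μ : S → S → ℝ) (p : Pt S) (t : S) : 0 ≤ Bc μ p t :=
  supmax_nonneg _

lemma Ac_ge (μ : S → S → ℝ) (p : Pt S) (s t : S) : μ s t - p.2 t ≤ Ac μ p s :=
  le_supmax' (fun t => μ s t - p.2 t) t

lemma Bc_ge (μ : S → S → ℝ) (p : Pt S) (s t : S) : μ s t - Ac μ p s ≤ Bc μ p t :=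
  le_supmax' (fun s => μ s t - Ac μ p s) s

lemma Dplus_nonneg (f g : S → ℝ) : 0 ≤ Dplus f g := supmax_nonneg _

lemma Dinf_nonneg (p q : Pt S) : 0 ≤ Dinf p q :=
  le_trans (Dplus_nonneg _ _) (le_max_left _ _)

lemma le_Dplus (f g : S → ℝ) (x : S) : g x - f x ≤ Dplus f g := le_supmax' (fun x => g x - f x) x

lemma Dplus_le {f g : S → ℝ} {B : ℝ} (h0 : 0 ≤ B) (h : ∀ x, g x - f x ≤ B) :
    Dplus f g ≤ B := supmax_le h0 h

end Helpers

/-- Lemma 2.5.  There is a nonexpansive retraction `φ : P_μ → T_μ` with `φ(p) ≤ p`. -/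
theorem stmt3 {S : Type*} [Fintype S] [Nonempty S] (μ : S → S → ℝ)
    (hμ : DirDist μ) :
    ∃ φ : Pt S → Pt S,
      (∀ p ∈ PP μ, φ p ∈ TT μ) ∧
      (∀ p ∈ PP μ, φ p ≤ p) ∧
      (∀ p ∈ TT μ, φ p = p) ∧
      (∀ p ∈ PP μ, ∀ q ∈ PP μ, Dinf (φ p) (φ q) ≤ Dinf p q) := by
  classical
  set φ : Pt S → Pt S := fun p => (Ac μ p, Bc μ p) with hφ
  -- φ p is always in PP μ
  have hmem : ∀ p : Pt S, φ p ∈ PP μ := by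
    intro p
    refine ⟨fun s t => ?_, ⟨fun s => Ac_nonneg μ p s, fun t => Bc_nonneg μ p t⟩⟩
    have := Bc_ge μ p s t
    simp only [hφ]
    linarith
  -- φ p ≤ p on PP μ
  have hle : ∀ p ∈ PP μ, φ p ≤ p := by
    intro p hp
    obtain ⟨hp1, hp2⟩ := hp
    refine ⟨fun s => ?_, fun t => ?_⟩
    · exact supmax_le (hp2.1 s) (fun t => by have := hp1 s t; linarith [hp2.2 t])
    · exact supmax_le (hp2.2 t) (fun s => by have := Ac_ge μ p s t; linarith)
  -- the key: Bc with respect to φ p equals Bc, and Ac (φ p) = Ac p on PP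
  have hAfix : ∀ p ∈ PP μ, ∀ s, Ac μ (φ p) s = Ac μ p s := by
    intro p hp s
    have hBle : ∀ t, Bc μ p t ≤ p.2 t := fun t => (hle p hp).2 t
    apply le_antisymm
    · exact supmax_le (Ac_nonneg μ p s) (fun t => by have := Bc_ge μ p s t; linarith)
    · refine ciSup_le fun t => ?_
      refine le_trans ?_ (le_supmax (fun t => μ s t - (φ p).2 t) t)
      have := hBle t
      simp only [hφ]
      exact max_le_max (by linarith) le_rfl
  -- minimality of φ p
  have hmin : ∀ p ∈ PP μ, φ p ∈ TT μ := by
    intro p hp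
    refine ⟨hmem p, fun q hq hqle => ?_⟩
    obtain ⟨hq1, hq2⟩ := hq
    have h1 : ∀ s, q.1 s = (φ p).1 s := by
      intro s
      refine le_antisymm (hqle.1 s) ?_
      have : Ac μ (φ p) s ≤ q.1 s := by
        refine supmax_le (hq2.1 s) (fun t => ?_)
        have h3 := hq1 s t
        have h4 : q.2 t ≤ (φ p).2 t := hqle.2 t
        linarith
      rw [hAfix p hp s] at this
      exact this
    refine Prod.ext (funext h1) (funext fun t => ?_)
    refine le_antisymm (hqle.2 t) ?_
    refine supmax_le (hq2.2 t) (fun s => ?_)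
    have h3 := hq1 s t
    have h4 := h1 s
    simp only [hφ] at h4
    linarith
  refine ⟨φ, hmin, hle, ?_, ?_⟩
  · intro p hp
    exact (hp.2 (φ p) (hmem p) (hle p hp.1)).symm ▸ rfl
  · intro p hp q hq
    set δ := Dinf p q with hδ
    have hδ0 : 0 ≤ δ := Dinf_nonneg p q
    have hc : ∀ s, Ac μ q s ≤ Ac μ p s + δ := by
      intro s
      refine supmax_le (by linarith [Ac_nonneg μ p s]) (fun t => ?_)
      have h1 : p.2 t - q.2 t ≤ δ :=
        le_trans (le_Dplus q.2 p.2 t) (le_trans (le_max_right _ _) le_rfl)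
      have h2 := Ac_ge μ p s t
      linarith
    have hr : ∀ t, Bc μ p t ≤ Bc μ q t + δ := by
      intro t
      refine supmax_le (by linarith [Bc_nonneg μ q t]) (fun s => ?_)
      have h1 := hc s
      have h2 := Bc_ge μ q s t
      linarith
    refine max_le ?_ ?_
    · exact Dplus_le hδ0 (fun s => by have := hc s; simp only [hφ]; linarith)
    · exact Dplus_le hδ0 (fun t => by have := hr t; simp only [hφ]; linarith)
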